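/- Let G be a topological group, H a complex Hilbert space, ρ a continuous representation of G on H, K a subgroup of G, and let H^K = {v ∈ H : ρ(k)v = v for all k ∈ K} denote the space of K-fixed vectors. Assume: (i) H^K is nonzero and finite-dimensional; (ii) H is the smallest closed ρ-invariant subspace containing H^K (i.e. H is the closed linear span of {ρ(g)v : g ∈ G, v ∈ H^K}); and (iii) there is a bounded linear operator P : H → H with P ∘ P = P, with range equal to H^K, and with P(U) ⊆ U for every closed ρ-invariant subspace U of H. Then there exists a closed ρ-invariant subspace U ⊊ H such that there is no closed ρ-invariant subspace E with U ⊊ E ⊊ H; that is, the quotient representation H/U is irreducible. -/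

import Mathlib

/-- The submodule of vectors fixed by every operator `ρ(k)`, `k ∈ K`. -/
def fixedVectorsOf {G H : Type*} [Group G]
    [NormedAddCommGroup H] [InnerProductSpace ℂ H]
    (ρ : G →* (H →L[ℂ] H)ˣ) (K : Subgroup G) : Submodule ℂ H where
  carrier := {v : H | ∀ k ∈ K, (ρ k : H →L[ℂ] H) v = v}
  zero_mem' := by intro k hk; simp
  add_mem' := by intro a b ha hb k hk; simp [ha k hk, hb k hk]
  smul_mem' := by intro c a ha k hk; simp [ha k hk]

/-- A closed subspace invariant under the representation. -/
def IsClosedInvariantSubspace {G H : Type*} [Group G]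
    [NormedAddCommGroup H] [InnerProductSpace ℂ H]
    (ρ : G →* (H →L[ℂ] H)ˣ) (U : Submodule ℂ H) : Prop :=
  IsClosed (U : Set H) ∧ ∀ g : G, ∀ v ∈ U, (ρ g : H →L[ℂ] H) v ∈ U

/-! Zorn's lemma applies to the proper closed invariant subspaces: the closure of the union `V`
of a chain of them is again proper. Indeed `P(V) ⊆ V ∩ H^K` is finite-dimensional, hence closed,
so if `V` were dense then `H^K = P(H) ⊆ V`. Being finitely generated, `H^K` would then lie in a
single member of the chain, which by (ii) would be all of `H`. -/

theorem Submodule.map_sSup_le_of_forall_map_le {R M : Type*} [Semiring R] [AddCommMonoid M]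
    [Module R M] (f : M →ₗ[R] M) {c : Set (Submodule R M)} (h : ∀ U ∈ c, U.map f ≤ U) :
    (sSup c).map f ≤ sSup c :=
  Submodule.map_le_iff_le_comap.mpr <| sSup_le fun U hU =>
    Submodule.map_le_iff_le_comap.mp ((h U hU).trans (le_sSup hU))

theorem Submodule.topologicalClosure_map_le_map_of_finiteDimensional_range {𝕜 E F : Type*}
    [NontriviallyNormedField 𝕜] [CompleteSpace 𝕜] [AddCommGroup E] [TopologicalSpace E]
    [IsTopologicalAddGroup E] [Module 𝕜 E] [ContinuousSMul 𝕜 E] [AddCommGroup F]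
    [TopologicalSpace F] [IsTopologicalAddGroup F] [T2Space F] [Module 𝕜 F] [ContinuousSMul 𝕜 F]
    (P : E →L[𝕜] F) [FiniteDimensional 𝕜 (LinearMap.range (P : E →ₗ[𝕜] F))]
    (V : Submodule 𝕜 E) :
    V.topologicalClosure.map (P : E →ₗ[𝕜] F) ≤ V.map (P : E →ₗ[𝕜] F) := by
  have : FiniteDimensional 𝕜 (V.map (P : E →ₗ[𝕜] F)) :=
    Submodule.finiteDimensional_of_le (LinearMap.map_le_range (f := (P : E →ₗ[𝕜] F)))
  calc V.topologicalClosure.map (P : E →ₗ[𝕜] F)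
      ≤ (V.map (P : E →ₗ[𝕜] F)).topologicalClosure := V.topologicalClosure_map P
    _ = V.map (P : E →ₗ[𝕜] F) :=
      (Submodule.closed_of_finiteDimensional _).submodule_topologicalClosure_eq

section

variable {G H : Type*} [Group G] [NormedAddCommGroup H] [InnerProductSpace ℂ H]
  {ρ : G →* (H →L[ℂ] H)ˣ}

theorem isClosedInvariantSubspace_bot : IsClosedInvariantSubspace ρ ⊥ :=
  ⟨Submodule.closed_of_finiteDimensional ⊥, fun g v hv => by
    rw [Submodule.mem_bot] at hv ⊢
    rw [hv, map_zero]⟩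

theorem IsClosedInvariantSubspace.map_le {U : Submodule ℂ H}
    (hU : IsClosedInvariantSubspace ρ U) (g : G) : U.map (ρ g : H →ₗ[ℂ] H) ≤ U :=
  Submodule.map_le_iff_le_comap.mpr (hU.2 g)

theorem isClosedInvariantSubspace_topologicalClosure_sSup {c : Set (Submodule ℂ H)}
    (hc : ∀ U ∈ c, IsClosedInvariantSubspace ρ U) :
    IsClosedInvariantSubspace ρ (sSup c).topologicalClosure := by
  refine ⟨(sSup c).isClosed_topologicalClosure, fun g v hv => ?_⟩
  have hinv := Submodule.map_sSup_le_of_forall_map_le _ fun U hU => (hc U hU).map_le g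
  exact ((sSup c).topologicalClosure_map _).trans (Submodule.topologicalClosure_mono hinv)
    ⟨v, hv, rfl⟩

theorem eq_top_of_fixedVectorsOf_le {K : Subgroup G}
    (hgen : (Submodule.span ℂ
        {w : H | ∃ g : G, ∃ v ∈ fixedVectorsOf ρ K,
          w = (ρ g : H →L[ℂ] H) v}).topologicalClosure = ⊤)
    {U : Submodule ℂ H} (hU : IsClosedInvariantSubspace ρ U) (hKU : fixedVectorsOf ρ K ≤ U) :
    U = ⊤ := by
  refine top_le_iff.mp (hgen ▸ Submodule.topologicalClosure_minimal _ ?_ hU.1)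
  rw [Submodule.span_le]
  rintro _ ⟨g, v, hv, rfl⟩
  exact hU.2 g v (hKU hv)

theorem topologicalClosure_sSup_ne_top {K : Subgroup G}
    (hfd : FiniteDimensional ℂ ↥(fixedVectorsOf ρ K))
    (hgen : (Submodule.span ℂ
        {w : H | ∃ g : G, ∃ v ∈ fixedVectorsOf ρ K,
          w = (ρ g : H →L[ℂ] H) v}).topologicalClosure = ⊤)
    (P : H →L[ℂ] H) (hPrange : Set.range P = (fixedVectorsOf ρ K : Set H))
    (hPpres : ∀ U : Submodule ℂ H, IsClosedInvariantSubspace ρ U → ∀ v ∈ U, P v ∈ U)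
    {c : Set (Submodule ℂ H)} (hc_ne : c.Nonempty) (hchain : IsChain (· ≤ ·) c)
    (hc : ∀ U ∈ c, IsClosedInvariantSubspace ρ U ∧ U ≠ ⊤) :
    (sSup c).topologicalClosure ≠ ⊤ := by
  intro hdense
  have hrange : LinearMap.range (P : H →ₗ[ℂ] H) = fixedVectorsOf ρ K :=
    SetLike.coe_injective ((LinearMap.coe_range _).trans hPrange)
  have : FiniteDimensional ℂ (LinearMap.range (P : H →ₗ[ℂ] H)) := hrange ▸ hfd
  have hPc : (sSup c).map (P : H →ₗ[ℂ] H) ≤ sSup c :=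
    Submodule.map_sSup_le_of_forall_map_le _ fun U hU =>
      Submodule.map_le_iff_le_comap.mpr (hPpres U (hc U hU).1)
  have hKc : fixedVectorsOf ρ K ≤ sSup c := by
    rw [← hrange, LinearMap.range_eq_map, ← hdense]
    exact ((sSup c).topologicalClosure_map_le_map_of_finiteDimensional_range P).trans hPc
  have hKcompact :=
    (Submodule.fg_iff_compact _).mp ((Submodule.fg_iff_finiteDimensional _).mpr hfd)
  obtain ⟨U, hUc, hKU⟩ := (CompleteLattice.isCompactElement_iff_le_of_directed_sSup_le _ _).mp
    hKcompact c hc_ne hchain.directedOn hKc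
  exact (hc U hUc).2 (eq_top_of_fixedVectorsOf_le hgen (hc U hUc).1 hKU)

end

theorem maximal_proper_invariant_subspace_exists_general
    {G : Type*} [Group G]
    {H : Type*} [NormedAddCommGroup H] [InnerProductSpace ℂ H]
    (ρ : G →* (H →L[ℂ] H)ˣ)
    (K : Subgroup G)
    (hne : fixedVectorsOf ρ K ≠ ⊥)
    (hfd : FiniteDimensional ℂ ↥(fixedVectorsOf ρ K))
    (hgen : (Submodule.span ℂ
        {w : H | ∃ g : G, ∃ v ∈ fixedVectorsOf ρ K,
          w = (ρ g : H →L[ℂ] H) v}).topologicalClosure = ⊤)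
    (P : H →L[ℂ] H)
    (hPrange : Set.range P = (fixedVectorsOf ρ K : Set H))
    (hPpres : ∀ U : Submodule ℂ H, IsClosedInvariantSubspace ρ U →
      ∀ v ∈ U, P v ∈ U) :
    ∃ U : Submodule ℂ H, IsClosedInvariantSubspace ρ U ∧ U ≠ ⊤ ∧
      ¬∃ E : Submodule ℂ H, IsClosedInvariantSubspace ρ E ∧ U < E ∧ E < ⊤ := by
  have hbot : (⊥ : Submodule ℂ H) ≠ ⊤ := fun h => hne (eq_bot_iff.mpr (h ▸ le_top))
  obtain ⟨M, -, hM⟩ := zorn_le_nonempty₀ {U | IsClosedInvariantSubspace ρ U ∧ U ≠ ⊤}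
    (fun c hcS hchain U hU => ⟨(sSup c).topologicalClosure,
      ⟨isClosedInvariantSubspace_topologicalClosure_sSup fun V hV => (hcS hV).1,
        topologicalClosure_sSup_ne_top hfd hgen P hPrange hPpres ⟨U, hU⟩ hchain hcS⟩,
      fun V hV => (le_sSup hV).trans (sSup c).le_topologicalClosure⟩)
    ⊥ ⟨isClosedInvariantSubspace_bot, hbot⟩
  refine ⟨M, hM.1.1, hM.1.2, ?_⟩
  rintro ⟨E, hE, hME, hEtop⟩
  exact hME.not_ge (hM.2 ⟨hE, hEtop.ne⟩ hME.le)

/-- If `H^K` is nonzero and finite dimensional, `H` is generated by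
`H^K` as a closed invariant subspace, and there is a bounded projection `P` onto
`H^K` preserving every closed invariant subspace, then `H` has a maximal proper
closed invariant subspace `U`, i.e. `H/U` is irreducible. -/
theorem maximal_proper_invariant_subspace_exists
    {G : Type*} [Group G] [TopologicalSpace G] [IsTopologicalGroup G]
    {H : Type*} [NormedAddCommGroup H] [InnerProductSpace ℂ H] [CompleteSpace H]
    (ρ : G →* (H →L[ℂ] H)ˣ)
    (hcont : Continuous fun p : G × H => (ρ p.1 : H →L[ℂ] H) p.2)
    (K : Subgroup G)
    (hne : fixedVectorsOf ρ K ≠ ⊥)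
    (hfd : FiniteDimensional ℂ ↥(fixedVectorsOf ρ K))
    (hgen : (Submodule.span ℂ
        {w : H | ∃ g : G, ∃ v ∈ fixedVectorsOf ρ K,
          w = (ρ g : H →L[ℂ] H) v}).topologicalClosure = ⊤)
    (P : H →L[ℂ] H)
    (hPproj : P.comp P = P)
    (hPrange : Set.range P = (fixedVectorsOf ρ K : Set H))
    (hPpres : ∀ U : Submodule ℂ H, IsClosedInvariantSubspace ρ U →
      ∀ v ∈ U, P v ∈ U) :
    ∃ U : Submodule ℂ H, IsClosedInvariantSubspace ρ U ∧ U ≠ ⊤ ∧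
      ¬∃ E : Submodule ℂ H, IsClosedInvariantSubspace ρ E ∧ U < E ∧ E < ⊤ :=
  maximal_proper_invariant_subspace_exists_general ρ K hne hfd hgen P hPrange hPpres
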